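/- arXiv:math/0505462 — 2 statements merged into one kernel-verified Lean document; each statement's English description precedes it below -/
import Mathlib

section
/- Suppose 0 < R < R_n. Then for each k ∈ {1,…,n}, the subspace {x = (C, J_1, …, J_n) ∈ M_n(R) : C = B_k} (configurations with the k-th arm folded) is homeomorphic to the disjoint union of 2^{n−1} circles; equivalently, it has exactly 2^{n−1} connected components and each component is homeomorphic to S¹. -/
/-- Euclidean norm of a vector in ℝ². -/
noncomputable def enorm2 (v : ℝ × ℝ) : ℝ := Real.sqrt (v.1 ^ 2 + v.2 ^ 2)

/-- The k-th fixed endpoint `B_k = (R cos(2kπ/n), R sin(2kπ/n))` (indices from 0). -/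
noncomputable def Bpt (n : ℕ) (R : ℝ) (k : Fin n) : ℝ × ℝ :=
  (R * Real.cos (2 * (k.val : ℝ) * Real.pi / (n : ℝ)),
   R * Real.sin (2 * (k.val : ℝ) * Real.pi / (n : ℝ)))

/-- The configuration space `M_n(R)` of spiders with `n` arms of radius `R`,
as a subset of `(ℝ²)^{n+1} ≅ ℝ^{2n+2}`: a pair `(C, J)` with
`|C − J_k| = 1` and `|J_k − B_k| = 1` for all `k`. -/
noncomputable def MSpace (n : ℕ) (R : ℝ) : Set ((ℝ × ℝ) × (Fin n → ℝ × ℝ)) :=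
  {x | ∀ k : Fin n, enorm2 (x.1 - x.2 k) = 1 ∧ enorm2 (x.2 k - Bpt n R k) = 1}

/-- `d_n`, the maximum distance between `n`-th roots of unity. -/
noncomputable def dmax (n : ℕ) : ℝ :=
  if Even n then 2
  else Real.sqrt (2 - 2 * Real.cos (2 * ((n / 2 : ℕ) : ℝ) * Real.pi / (n : ℝ)))

/-- The critical radius `R_n = 2 / d_n`. -/
noncomputable def Rcrit (n : ℕ) : ℝ := 2 / dmax n

/-!
With the `k`-th arm folded the body sits at `B k`, so the `k`-th knee ranges freely over the unit
circle around `B k`, while for `j ≠ k` the `j`-th knee lies on both unit circles around `B k` and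
`B j`. For `0 < R < R_n` two distinct anchors are at distance in `(0, 2)`: their squared distance
is `R² (2 - 2 cos (2lπ/n))` with `0 < l < n`, and `2 - 2 cos (2lπ/n) ≤ d_n²`. So each such pair
of circles meets in exactly two points, and choosing one of them for every `j ≠ k`, together with
a point of the circle, gives a continuous bijection from the compact space `Bool^{n-1} × S¹` onto
the folded configurations, hence a homeomorphism.
-/

lemma enorm2_sq (v : ℝ × ℝ) : enorm2 v ^ 2 = v.1 ^ 2 + v.2 ^ 2 :=
  Real.sq_sqrt (by positivity)

lemma enorm2_sub_sq (a b : ℝ × ℝ) : enorm2 (a - b) ^ 2 = (a.1 - b.1) ^ 2 + (a.2 - b.2) ^ 2 :=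
  enorm2_sq _

lemma enorm2_nonneg (v : ℝ × ℝ) : 0 ≤ enorm2 v := Real.sqrt_nonneg _

lemma enorm2_eq_one_iff_sq (v : ℝ × ℝ) : enorm2 v = 1 ↔ enorm2 v ^ 2 = 1 :=
  (pow_eq_one_iff_of_nonneg (enorm2_nonneg v) two_ne_zero).symm

lemma enorm2_sub_comm (a b : ℝ × ℝ) : enorm2 (a - b) = enorm2 (b - a) := by
  simp only [enorm2, Prod.fst_sub, Prod.snd_sub]
  ring_nf

lemma enorm2_sub_pos {a b : ℝ × ℝ} (h : a ≠ b) : 0 < enorm2 (a - b) := by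
  refine Real.sqrt_pos.mpr (lt_of_le_of_ne (by positivity) fun h0 => h ?_)
  simp only [Prod.fst_sub, Prod.snd_sub] at h0
  have h1 : a.1 - b.1 = 0 := by nlinarith [sq_nonneg (a.1 - b.1), sq_nonneg (a.2 - b.2)]
  have h2 : a.2 - b.2 = 0 := by nlinarith [sq_nonneg (a.1 - b.1), sq_nonneg (a.2 - b.2)]
  exact Prod.ext (sub_eq_zero.mp h1) (sub_eq_zero.mp h2)

noncomputable def bisectorPoint (a b : ℝ × ℝ) (t : ℝ) : ℝ × ℝ :=
  ((a.1 + b.1) / 2 + t * (a.2 - b.2), (a.2 + b.2) / 2 - t * (a.1 - b.1))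

section UnitCircles

variable {a b : ℝ × ℝ}

lemma enorm2_sub_bisectorPoint_sq (t : ℝ) :
    enorm2 (a - bisectorPoint a b t) ^ 2 = enorm2 (a - b) ^ 2 * (1 / 4 + t ^ 2) := by
  simp only [enorm2_sq, bisectorPoint, Prod.fst_sub, Prod.snd_sub]
  ring

lemma enorm2_bisectorPoint_sub_sq (t : ℝ) :
    enorm2 (bisectorPoint a b t - b) ^ 2 = enorm2 (a - b) ^ 2 * (1 / 4 + t ^ 2) := by
  simp only [enorm2_sq, bisectorPoint, Prod.fst_sub, Prod.snd_sub]
  ring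

lemma bisectorPoint_injective (h : a ≠ b) : Function.Injective (bisectorPoint a b) := by
  intro t t' htt
  have hd := enorm2_sub_pos h
  have h1 := congrArg Prod.fst htt
  have h2 := congrArg Prod.snd htt
  simp only [bisectorPoint] at h1 h2
  have : (t - t') * enorm2 (a - b) ^ 2 = 0 := by
    rw [enorm2_sub_sq]
    linear_combination (a.2 - b.2) * h1 - (a.1 - b.1) * h2
  simpa [sub_eq_zero, hd.ne'] using this

lemma exists_eq_bisectorPoint (h : a ≠ b) {x : ℝ × ℝ}
    (hx : enorm2 (a - x) = enorm2 (x - b)) : ∃ t, x = bisectorPoint a b t := by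
  have hd : (a.1 - b.1) ^ 2 + (a.2 - b.2) ^ 2 ≠ 0 := by
    simpa [enorm2_sq] using (pow_pos (enorm2_sub_pos h) 2).ne'
  have hdot :
      (x.1 - (a.1 + b.1) / 2) * (a.1 - b.1) + (x.2 - (a.2 + b.2) / 2) * (a.2 - b.2) = 0 := by
    have := congrArg (· ^ 2) hx
    simp only [enorm2_sq, Prod.fst_sub, Prod.snd_sub] at this
    linear_combination -this / 2
  refine ⟨((x.1 - (a.1 + b.1) / 2) * (a.2 - b.2) - (x.2 - (a.2 + b.2) / 2) * (a.1 - b.1)) /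
    ((a.1 - b.1) ^ 2 + (a.2 - b.2) ^ 2), Prod.ext ?_ ?_⟩
  · simp only [bisectorPoint]
    field_simp
    linear_combination 2 * (a.1 - b.1) * hdot
  · simp only [bisectorPoint]
    field_simp
    linear_combination 2 * (a.2 - b.2) * hdot

/-- `√(1 - |a - b|² / 4)`, half the common chord of the unit circles around `a` and `b`, divided
by `|a - b|`. -/
noncomputable def unitCirclesParam (a b : ℝ × ℝ) : ℝ :=
  Real.sqrt (1 / enorm2 (a - b) ^ 2 - 1 / 4)

noncomputable def unitCirclesInter (a b : ℝ × ℝ) (s : Bool) : ℝ × ℝ :=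
  bisectorPoint a b (if s then unitCirclesParam a b else -unitCirclesParam a b)

lemma sq_unitCirclesParam (h : a ≠ b) (h₂ : enorm2 (a - b) ≤ 2) :
    unitCirclesParam a b ^ 2 = 1 / enorm2 (a - b) ^ 2 - 1 / 4 := by
  have h₀ := enorm2_sub_pos h
  refine Real.sq_sqrt (sub_nonneg.mpr ?_)
  gcongr
  nlinarith

lemma unitCirclesParam_pos (h : a ≠ b) (h₂ : enorm2 (a - b) < 2) :
    0 < unitCirclesParam a b := by
  have h₀ := enorm2_sub_pos h
  refine Real.sqrt_pos.mpr (sub_pos.mpr ?_)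
  gcongr
  nlinarith

lemma unitCirclesInter_mem (h : a ≠ b) (h₂ : enorm2 (a - b) ≤ 2) (s : Bool) :
    enorm2 (a - unitCirclesInter a b s) = 1 ∧ enorm2 (unitCirclesInter a b s - b) = 1 := by
  have hd := (enorm2_sub_pos h).ne'
  have hs : (if s then unitCirclesParam a b else -unitCirclesParam a b) ^ 2 =
      unitCirclesParam a b ^ 2 := by
    cases s <;> simp
  have key : enorm2 (a - b) ^ 2 * (1 / 4 + unitCirclesParam a b ^ 2) = 1 := by
    rw [sq_unitCirclesParam h h₂]
    field_simp
    ring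
  simp only [enorm2_eq_one_iff_sq, unitCirclesInter, enorm2_sub_bisectorPoint_sq,
    enorm2_bisectorPoint_sub_sq, hs, key, and_self]

lemma exists_unitCirclesInter_eq (h : a ≠ b) (h₂ : enorm2 (a - b) ≤ 2) {x : ℝ × ℝ}
    (hax : enorm2 (a - x) = 1) (hxb : enorm2 (x - b) = 1) : ∃ s, unitCirclesInter a b s = x := by
  obtain ⟨t, rfl⟩ := exists_eq_bisectorPoint h (hax.trans hxb.symm)
  have hd := (enorm2_sub_pos h).ne'
  have ht : t ^ 2 = unitCirclesParam a b ^ 2 := by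
    rw [enorm2_eq_one_iff_sq, enorm2_sub_bisectorPoint_sq] at hax
    rw [sq_unitCirclesParam h h₂]
    field_simp
    linear_combination 4 * hax
  rcases sq_eq_sq_iff_eq_or_eq_neg.mp ht with ht | ht
  · exact ⟨true, by simp [unitCirclesInter, ht]⟩
  · exact ⟨false, by simp [unitCirclesInter, ht]⟩

lemma unitCirclesInter_injective (h : a ≠ b) (h₂ : enorm2 (a - b) < 2) :
    Function.Injective (unitCirclesInter a b) := by
  have hτ := unitCirclesParam_pos h h₂
  intro s s' hss
  have := bisectorPoint_injective h hss
  cases s <;> cases s' <;> simp only [ite_true, Bool.false_eq_true, ite_false] at this ⊢ <;>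
    linarith

end UnitCircles

open Real in
lemma cos_two_mul_sub_mul_pi_div {n l : ℕ} (hn : n ≠ 0) (hln : l ≤ n) :
    cos (2 * ((n - l : ℕ) : ℝ) * π / n) = cos (2 * l * π / n) := by
  rw [← cos_two_pi_sub]
  congr 1
  push_cast [hln]
  field_simp
  ring

open Real in
lemma two_sub_two_cos_pos {n l : ℕ} (hl : 0 < l) (hln : l < n) :
    0 < 2 - 2 * cos (2 * l * π / n) := by
  have hn : (0 : ℝ) < n := by exact_mod_cast hl.trans hln
  have hl' : (0 : ℝ) < l := by exact_mod_cast hl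
  have hln' : (l : ℝ) < n := by exact_mod_cast hln
  have hx0 : 0 < 2 * l * π / n := by positivity
  have hx2 : 2 * l * π / n < 2 * π := by
    rw [div_lt_iff₀ hn]
    nlinarith [pi_pos]
  have hne : cos (2 * l * π / n) ≠ 1 :=
    fun h => hx0.ne' ((cos_eq_one_iff_of_lt_of_lt (by linarith) hx2).mp h)
  linarith [lt_of_le_of_ne (cos_le_one _) hne]

open Real in
lemma two_sub_two_cos_le_dmax_sq {n l : ℕ} (hln : l ≤ n) :
    2 - 2 * cos (2 * l * π / n) ≤ dmax n ^ 2 := by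
  unfold dmax
  split_ifs with he
  · nlinarith [neg_one_le_cos (2 * l * π / n)]
  set m := n / 2
  have hnm : n = 2 * m + 1 := by have := Nat.odd_iff.mp (Nat.not_even_iff_odd.mp he); omega
  rw [sq_sqrt (by nlinarith [cos_le_one (2 * m * π / n)])]
  suffices cos (2 * m * π / n) ≤ cos (2 * l * π / n) by linarith
  wlog hlm : l ≤ m generalizing l
  · have := this (l := n - l) (by omega) (by omega)
    rwa [cos_two_mul_sub_mul_pi_div (by omega) hln] at this
  have hn : (0 : ℝ) < n := by exact_mod_cast (by omega : 0 < n)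
  apply cos_le_cos_of_nonneg_of_le_pi (by positivity)
  · rw [div_le_iff₀ hn]
    have : (2 * m : ℝ) ≤ n := by exact_mod_cast (by omega : 2 * m ≤ n)
    nlinarith [pi_pos]
  · gcongr


open Real in
lemma enorm2_Bpt_sub_sq (n : ℕ) (R : ℝ) {j k : Fin n} (hjk : j ≤ k) :
    enorm2 (Bpt n R k - Bpt n R j) ^ 2 = R ^ 2 * (2 - 2 * cos (2 * (k - j : ℕ) * π / n)) := by
  have hcos : cos (2 * (k - j : ℕ) * π / n) = cos (2 * k * π / n - 2 * j * π / n) := by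
    push_cast [Fin.le_iff_val_le_val.mp hjk]
    ring_nf
  rw [hcos, cos_sub, enorm2_sq]
  simp only [Bpt, Prod.fst_sub, Prod.snd_sub]
  linear_combination
    R ^ 2 * (sin_sq_add_cos_sq (2 * k * π / n) + sin_sq_add_cos_sq (2 * j * π / n))

def FoldableAt {ι : Type*} (B : ι → ℝ × ℝ) (k : ι) : Prop :=
  ∀ j ≠ k, B k ≠ B j ∧ enorm2 (B k - B j) < 2

lemma foldableAt_Bpt {n : ℕ} {R : ℝ} (hR0 : 0 < R) (hRn : R < Rcrit n) (k : Fin n) :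
    FoldableAt (Bpt n R) k := by
  intro j hjk
  wlog hlt : j < k generalizing j k
  · obtain ⟨hne, hlt⟩ :=
      this (j := k) (k := j) hjk.symm (lt_of_le_of_ne (not_lt.mp hlt) hjk.symm)
    exact ⟨hne.symm, enorm2_sub_comm (Bpt n R j) _ ▸ hlt⟩
  have hd : 0 < dmax n := by
    have : 0 < 2 / dmax n := hR0.trans hRn
    exact (div_pos_iff_of_pos_left two_pos).mp this
  have hRd : R * dmax n < 2 := (lt_div_iff₀ hd).mp hRn
  have hsq := enorm2_Bpt_sub_sq n R hlt.le
  have hpos := two_sub_two_cos_pos (n := n) (Nat.sub_pos_of_lt hlt) (by omega)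
  have hle := two_sub_two_cos_le_dmax_sq (n := n) ((Nat.sub_le k j).trans k.isLt.le)
  have hsq_pos : 0 < enorm2 (Bpt n R k - Bpt n R j) ^ 2 := hsq ▸ by positivity
  refine ⟨fun heq => ?_, ?_⟩
  · simp [heq, enorm2] at hsq_pos
  · nlinarith [enorm2_nonneg (Bpt n R k - Bpt n R j), mul_pos hR0 hd]

instance : CompactSpace {p : ℝ × ℝ // p.1 ^ 2 + p.2 ^ 2 = 1} := by
  have hclosed : IsClosed {p : ℝ × ℝ | p.1 ^ 2 + p.2 ^ 2 = 1} :=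
    isClosed_eq (by fun_prop) continuous_const
  refine isCompact_iff_compactSpace.mp (Metric.isCompact_of_isClosed_isBounded hclosed
    ((Metric.isBounded_closedBall (x := 0) (r := 1)).subset ?_))
  intro p (hp : p.1 ^ 2 + p.2 ^ 2 = 1)
  simp only [Metric.mem_closedBall, dist_zero_right, Prod.norm_def, Real.norm_eq_abs]
  exact max_le (abs_le_one_iff_mul_self_le_one.mpr (by nlinarith))
    (abs_le_one_iff_mul_self_le_one.mpr (by nlinarith))

def spiderSpace {ι : Type*} (B : ι → ℝ × ℝ) : Set ((ℝ × ℝ) × (ι → ℝ × ℝ)) :=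
  {x | ∀ j, enorm2 (x.1 - x.2 j) = 1 ∧ enorm2 (x.2 j - B j) = 1}

section FoldedSpider

variable {ι : Type*} [DecidableEq ι]

noncomputable def foldedConfig (B : ι → ℝ × ℝ) (k : ι) (c : {j // j ≠ k} → Bool)
    (z : ℝ × ℝ) : (ℝ × ℝ) × (ι → ℝ × ℝ) :=
  (B k, fun j => if h : j = k then B k + z else unitCirclesInter (B k) (B j) (c ⟨j, h⟩))

variable {B : ι → ℝ × ℝ} {k : ι}

lemma foldedConfig_mem (hB : FoldableAt B k) (c : {j // j ≠ k} → Bool) {z : ℝ × ℝ}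
    (hz : z.1 ^ 2 + z.2 ^ 2 = 1) :
    foldedConfig B k c z ∈ spiderSpace B := by
  intro j
  by_cases hj : j = k
  · subst hj
    simp only [foldedConfig, dif_pos, enorm2, sub_add_cancel_left, add_sub_cancel_left,
      Prod.fst_neg, Prod.snd_neg, neg_sq, hz, Real.sqrt_one, and_self]
  · simp only [foldedConfig, dif_neg hj]
    exact unitCirclesInter_mem (hB j hj).1 (hB j hj).2.le _

lemma foldedConfig_injective (hB : FoldableAt B k) :
    Function.Injective fun cz : ({j // j ≠ k} → Bool) × (ℝ × ℝ) =>
      foldedConfig B k cz.1 cz.2 := by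
  rintro ⟨c, z⟩ ⟨c', z'⟩ h
  have h2 := congrArg Prod.snd h
  have hz : B k + z = B k + z' := by simpa [foldedConfig] using congrFun h2 k
  refine Prod.ext (funext fun ⟨j, hj⟩ => ?_) (add_left_cancel hz)
  have := congrFun h2 j
  simp only [foldedConfig, dif_neg hj] at this
  exact unitCirclesInter_injective (hB j hj).1 (hB j hj).2 this

lemma exists_foldedConfig_eq (hB : FoldableAt B k) {x : (ℝ × ℝ) × (ι → ℝ × ℝ)}
    (hx : x ∈ spiderSpace B) (hxk : x.1 = B k) :
    ∃ c z, z.1 ^ 2 + z.2 ^ 2 = 1 ∧ foldedConfig B k c z = x := by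
  have hjoint : ∀ j (hj : j ≠ k), ∃ s, unitCirclesInter (B k) (B j) s = x.2 j := fun j hj =>
    exists_unitCirclesInter_eq (hB j hj).1 (hB j hj).2.le (hxk ▸ (hx j).1) (hx j).2
  choose c hc using hjoint
  refine ⟨fun j => c j j.2, x.2 k - B k, ?_, ?_⟩
  · exact (enorm2_sq _).symm.trans ((enorm2_eq_one_iff_sq _).mp (hx k).2)
  · refine Prod.ext hxk.symm (funext fun j => ?_)
    by_cases hj : j = k
    · subst hj
      simp [foldedConfig]
    · simp only [foldedConfig, dif_neg hj, hc]

lemma continuous_foldedConfig (B : ι → ℝ × ℝ) (k : ι) :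
    Continuous fun cz : ({j // j ≠ k} → Bool) × (ℝ × ℝ) =>
      foldedConfig B k cz.1 cz.2 := by
  refine continuous_const.prodMk (continuous_pi fun j => ?_)
  by_cases hj : j = k
  · simp only [dif_pos hj]
    fun_prop
  · simp only [dif_neg hj]
    exact ((continuous_of_discreteTopology (f := unitCirclesInter (B k) (B j))).comp
      (continuous_apply (A := fun _ : {j // j ≠ k} => Bool) ⟨j, hj⟩)).comp continuous_fst

noncomputable def foldedSpiderHomeomorph (hB : FoldableAt B k) :
    ({j // j ≠ k} → Bool) × {p : ℝ × ℝ // p.1 ^ 2 + p.2 ^ 2 = 1} ≃ₜ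
      {x // x ∈ spiderSpace B ∧ x.1 = B k} :=
  let f (cz : ({j // j ≠ k} → Bool) × {p : ℝ × ℝ // p.1 ^ 2 + p.2 ^ 2 = 1}) :
      {x // x ∈ spiderSpace B ∧ x.1 = B k} :=
    ⟨foldedConfig B k cz.1 cz.2, foldedConfig_mem hB cz.1 cz.2.2, rfl⟩
  have hinj : Function.Injective f := fun cz cz' h => by
    have : (cz.1, cz.2.val) = (cz'.1, cz'.2.val) :=
      foldedConfig_injective hB (congrArg Subtype.val h)
    rw [Prod.mk.injEq] at this
    exact Prod.ext this.1 (Subtype.ext this.2)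
  have hsurj : Function.Surjective f := fun ⟨x, hx, hxk⟩ => by
    obtain ⟨c, z, hz, rfl⟩ := exists_foldedConfig_eq hB hx hxk
    exact ⟨(c, ⟨z, hz⟩), rfl⟩
  have hcont : Continuous f := ((continuous_foldedConfig B k).comp
    (continuous_id.prodMap continuous_subtype_val)).subtype_mk _
  Continuous.homeoOfEquivCompactToT2 (f := Equiv.ofBijective f ⟨hinj, hsurj⟩) hcont

end FoldedSpider

theorem stmt17_general (n : ℕ) (R : ℝ) (hR0 : 0 < R) (hRn : R < Rcrit n)
    (k : Fin n) :
    Nonempty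
      (({x : (ℝ × ℝ) × (Fin n → ℝ × ℝ) // x ∈ MSpace n R ∧ x.1 = Bpt n R k}) ≃ₜ
        (Fin (2 ^ (n - 1)) × {p : ℝ × ℝ // p.1 ^ 2 + p.2 ^ 2 = 1})) := by
  have hcard : Nat.card ({j : Fin n // j ≠ k} → Bool) = 2 ^ (n - 1) := by
    simp [Nat.card_eq_fintype_card, Fintype.card_subtype_compl]
  let e := Finite.equivFinOfCardEq hcard
  let signs : ({j : Fin n // j ≠ k} → Bool) ≃ₜ Fin (2 ^ (n - 1)) :=
    ⟨e, continuous_of_discreteTopology, continuous_of_discreteTopology⟩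
  exact ⟨(foldedSpiderHomeomorph (foldableAt_Bpt hR0 hRn k)).symm.trans
    (signs.prodCongr (.refl _))⟩

/-- Suppose `0 < R < R_n`. For each `k`, the subspace of `M_n(R)` of configurations
with the `k`-th arm folded (`C = B_k`) is homeomorphic to the disjoint union of
`2^{n−1}` circles, i.e. to `Fin (2^{n−1}) × S¹` where `S¹` is the unit circle in `ℝ²`. -/
theorem stmt17 (n : ℕ) (hn : 2 ≤ n) (R : ℝ) (hR0 : 0 < R) (hRn : R < Rcrit n)
    (k : Fin n) :
    Nonempty
      (({x : (ℝ × ℝ) × (Fin n → ℝ × ℝ) // x ∈ MSpace n R ∧ x.1 = Bpt n R k}) ≃ₜ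
        (Fin (2 ^ (n - 1)) × {p : ℝ × ℝ // p.1 ^ 2 + p.2 ^ 2 = 1})) :=
  stmt17_general n R hR0 hRn k
end

section
/- Suppose n ≥ 3 is odd and 0 < R < R_n. Then the set {x = (C, J_1, …, J_n) ∈ M_n(R) : there exists k with a_k = b_k = (0,1) or a_k = b_k = (0,−1)} (configurations with a stretched-out arm parallel to the y-axis) is finite and has exactly 2^n elements. -/
/-! If arm `k` is stretched out along `(0, s)`, the body sits at `B_k + (0, 2s)`. Every foot must
be within distance `2` of the body; for odd `n` and `R cos (π / 2n) < 1` (which is `R < R_n`)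
this forces `B_k` to be the unique vertex of least height `s · y`, the one at angle
`π + sπ/2 ± π/2n`. Every other foot then lies strictly inside the disc of radius `2` about the
body, and not at its centre since all feet are at mutual distance `< 2`. So the body is
determined, the stretched knee is the midpoint of its arm, and each of the other `n - 1` knees has
exactly two positions: `2^(n-1)` configurations for each sign `s`, with different bodies for the
two signs. -/

open Real

lemma mul_one_sub_cos_two_mul_lt {R h x : ℝ} (hh : 0 < h) (hh' : h < π / 2) (hx : 0 < x)
    (hxh : x + 2 * h ≤ π) (hR : R * cos h < 1) :
    R * (1 - cos (2 * x)) < 2 * (cos h - cos (2 * x + h)) := by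
  have hsin : 0 < sin x := sin_pos_of_pos_of_lt_pi hx (by linarith)
  have hcos : 0 < cos h := cos_pos_of_mem_Ioo ⟨by linarith, hh'⟩
  have hsin2 : 0 ≤ sin (x + 2 * h) := sin_nonneg_of_nonneg_of_le_pi (by linarith) hxh
  have hsum : 2 * sin (x + h) * cos h = sin (x + 2 * h) + sin x := by
    simp only [sin_add, sin_two_mul, cos_two_mul]; ring
  have hlt : R * sin x < 2 * sin (x + h) := by
    refine lt_of_mul_lt_mul_right ?_ hcos.le
    calc R * sin x * cos h = (R * cos h) * sin x := by ring
      _ < 1 * sin x := mul_lt_mul_of_pos_right hR hsin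
      _ ≤ 2 * sin (x + h) * cos h := by linarith
  have hlhs : 1 - cos (2 * x) = 2 * sin x ^ 2 := by rw [cos_two_mul, cos_sq']; ring
  have hrhs : cos h - cos (2 * x + h) = 2 * sin x * sin (x + h) := by
    simp only [cos_add, sin_add, cos_two_mul, sin_two_mul, cos_sq']; ring
  rw [hlhs, hrhs]
  nlinarith [mul_lt_mul_of_pos_left hlt hsin]

lemma cos_two_mul_intCast_div_add_emod {n : ℕ} (hn : n ≠ 0) (m : ℤ) (t : ℝ) :
    cos (2 * m * π / n + t) = cos (2 * ((m % n : ℤ) : ℝ) * π / n + t) := by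
  have hm : (m : ℝ) = ((m % n : ℤ) : ℝ) + n * ((m / n : ℤ) : ℝ) := by
    have := congrArg (Int.cast : ℤ → ℝ) (Int.mul_ediv_add_emod m n)
    push_cast at this
    linarith
  rw [← cos_add_int_mul_two_pi (2 * ((m % n : ℤ) : ℝ) * π / n + t) (m / n)]
  congr 1
  rw [hm]
  field_simp
  ring

lemma cos_pi_div_two_mul_nonneg (n : ℕ) : 0 ≤ cos (π / (2 * n)) := by
  apply cos_nonneg_of_mem_Icc
  have h0 : 0 ≤ π / (2 * n) := by positivity
  refine ⟨by linarith [pi_pos], ?_⟩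
  rcases n.eq_zero_or_pos with rfl | hn
  · simp only [Nat.cast_zero, mul_zero, div_zero]; positivity
  · exact div_le_div_of_nonneg_left pi_pos.le two_pos (by
      have : (1 : ℝ) ≤ n := by exact_mod_cast hn
      linarith)

lemma mul_one_sub_cos_lt_of_not_dvd {n : ℕ} (hn : n ≠ 0) {m : ℤ} (hm : ¬ (n : ℤ) ∣ m)
    {R : ℝ} (hR : R * cos (π / (2 * n)) < 1) {ε : ℝ} (hε : ε = 1 ∨ ε = -1) :
    R * (1 - cos (2 * m * π / n)) <
      2 * (cos (π / (2 * n)) - cos (2 * m * π / n + ε * (π / (2 * n)))) := by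
  have hplus : ∀ m : ℤ, ¬ (n : ℤ) ∣ m → R * (1 - cos (2 * m * π / n)) <
      2 * (cos (π / (2 * n)) - cos (2 * m * π / n + π / (2 * n))) := by
    intro m hm
    have hr0 : 0 < m % n := lt_of_le_of_ne (Int.emod_nonneg m (by exact_mod_cast hn))
      (fun h => hm (Int.dvd_of_emod_eq_zero h.symm))
    have hrn : m % n < n := Int.emod_lt_of_pos m (by omega)
    have hr0' : (0 : ℝ) < ((m % n : ℤ) : ℝ) := by exact_mod_cast hr0
    have hrn' : ((m % n : ℤ) : ℝ) + 1 ≤ n := by exact_mod_cast hrn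
    have hnpos : (0 : ℝ) < n := by positivity
    have h := mul_one_sub_cos_two_mul_lt (R := R) (h := π / (2 * n)) (x := (m % n : ℤ) * π / n)
      (by positivity) ?_ (by positivity) ?_ hR
    · have h0 := cos_two_mul_intCast_div_add_emod hn m 0
      simp only [add_zero] at h0
      rw [h0, cos_two_mul_intCast_div_add_emod hn m]
      convert h using 4 <;> ring
    · rw [div_lt_div_iff₀ (by positivity) two_pos]
      have : (2 : ℝ) ≤ n := by exact_mod_cast (show 2 ≤ (n : ℤ) by omega)
      nlinarith [pi_pos]
    · rw [show ((m % n : ℤ) : ℝ) * π / n + 2 * (π / (2 * n)) =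
          (((m % n : ℤ) : ℝ) + 1) * π / n by field_simp, div_le_iff₀ hnpos]
      nlinarith [pi_pos]
  rcases hε with rfl | rfl
  · simpa using hplus m hm
  · have h := hplus (-m) (by rwa [Int.dvd_neg])
    push_cast at h
    rwa [show 2 * -(m : ℝ) * π / n = -(2 * m * π / n) by ring, cos_neg,
      show -(2 * (m : ℝ) * π / n) + π / (2 * n) = -(2 * m * π / n + -1 * (π / (2 * n))) by
        ring, cos_neg] at h

lemma neg_cos_pi_div_le_cos {n : ℕ} (hodd : Odd n) (m : ℤ) :
    -cos (π / n) ≤ cos (2 * m * π / n) := by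
  have hn : n ≠ 0 := by rintro rfl; simp at hodd
  have hnpos : (0 : ℝ) < n := by positivity
  have hanti : ∀ y, 0 ≤ y → y ≤ π - π / n → -cos (π / n) ≤ cos y := fun y h0 h1 => by
    rw [← cos_pi_sub]
    exact cos_le_cos_of_nonneg_of_le_pi h0 (by linarith [div_pos pi_pos hnpos]) h1
  have hr0 : 0 ≤ m % n := Int.emod_nonneg m (by exact_mod_cast hn)
  have hrn : m % n < n := Int.emod_lt_of_pos m (by omega)
  obtain ⟨l, hl⟩ := hodd
  have h0 := cos_two_mul_intCast_div_add_emod hn m 0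
  simp only [add_zero] at h0
  rw [h0]
  rcases (show 2 * (m % n) + 1 ≤ n ∨ n + 1 ≤ 2 * (m % n) by omega) with h | h
  · have h' : 2 * ((m % n : ℤ) : ℝ) + 1 ≤ n := by exact_mod_cast h
    apply hanti _ (by positivity)
    rw [le_sub_iff_add_le, ← add_div, div_le_iff₀ hnpos]
    nlinarith [pi_pos]
  · have h' : (n : ℝ) + 1 ≤ 2 * ((m % n : ℤ) : ℝ) := by exact_mod_cast h
    have h'' : ((m % n : ℤ) : ℝ) ≤ n := by exact_mod_cast hrn.le
    rw [← cos_two_pi_sub (2 * ((m % n : ℤ) : ℝ) * π / n)]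
    apply hanti
    · rw [sub_nonneg, div_le_iff₀ hnpos]; nlinarith [pi_pos]
    · rw [show 2 * π - 2 * ((m % n : ℤ) : ℝ) * π / n =
          π - (2 * ((m % n : ℤ) : ℝ) - n) * π / n by field_simp; ring]
      gcongr
      nlinarith [pi_pos]

def sqDist (P Q : ℝ × ℝ) : ℝ := (P.1 - Q.1) ^ 2 + (P.2 - Q.2) ^ 2

lemma sqDist_comm (P Q : ℝ × ℝ) : sqDist P Q = sqDist Q P := by
  unfold sqDist; ring

lemma sqDist_eq_zero_iff {P Q : ℝ × ℝ} : sqDist P Q = 0 ↔ P = Q := by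
  unfold sqDist
  constructor
  · intro h
    have h1 : (P.1 - Q.1) ^ 2 = 0 := by nlinarith [sq_nonneg (P.1 - Q.1), sq_nonneg (P.2 - Q.2)]
    have h2 : (P.2 - Q.2) ^ 2 = 0 := by nlinarith [sq_nonneg (P.1 - Q.1), sq_nonneg (P.2 - Q.2)]
    exact Prod.ext (by simpa [sub_eq_zero] using h1) (by simpa [sub_eq_zero] using h2)
  · rintro rfl; simp

lemma sqDist_nonneg (P Q : ℝ × ℝ) : 0 ≤ sqDist P Q := by
  unfold sqDist; positivity

lemma sqDist_add_vertical (P Q : ℝ × ℝ) (c : ℝ) :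
    sqDist (P + (0, c)) Q = sqDist P Q + 2 * c * (P.2 - Q.2) + c ^ 2 := by
  simp only [sqDist, Prod.fst_add, Prod.snd_add]; ring

lemma sqDist_Bpt (n : ℕ) (R : ℝ) (j k : Fin n) :
    sqDist (Bpt n R j) (Bpt n R k) =
      2 * R ^ 2 * (1 - cos (2 * (((j : ℕ) - (k : ℕ) : ℤ) : ℝ) * π / n)) := by
  have harg : 2 * (((j : ℕ) - (k : ℕ) : ℤ) : ℝ) * π / n =
      2 * (j : ℕ) * π / n - 2 * (k : ℕ) * π / n := by push_cast; ring
  simp only [sqDist, Bpt, harg, cos_sub]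
  linear_combination R ^ 2 * sin_sq_add_cos_sq (2 * ((j : ℕ) : ℝ) * π / n)
    + R ^ 2 * sin_sq_add_cos_sq (2 * ((k : ℕ) : ℝ) * π / n)

lemma sqDist_Bpt_lt_four {n : ℕ} (hodd : Odd n) {R : ℝ} (hR0 : 0 ≤ R)
    (hR : R * cos (π / (2 * n)) < 1) (j k : Fin n) :
    sqDist (Bpt n R j) (Bpt n R k) < 4 := by
  have hcos := neg_cos_pi_div_le_cos hodd ((j : ℕ) - (k : ℕ))
  have hhalf : cos (π / n) = 2 * cos (π / (2 * n)) ^ 2 - 1 := by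
    rw [← cos_two_mul]; congr 1; field_simp
  have hc0 : 0 ≤ R * cos (π / (2 * n)) :=
    mul_nonneg hR0 (cos_pi_div_two_mul_nonneg n)
  rw [sqDist_Bpt]
  have hle : 1 - cos (2 * (((j : ℕ) - (k : ℕ) : ℤ) : ℝ) * π / n) ≤
      2 * cos (π / (2 * n)) ^ 2 := by linarith
  nlinarith [mul_le_mul_of_nonneg_left hle (sq_nonneg R)]

lemma dmax_of_odd {n : ℕ} (hodd : Odd n) : dmax n = 2 * cos (π / (2 * n)) := by
  obtain ⟨l, rfl⟩ := hodd
  have hhalf : ((2 * l + 1) / 2 : ℕ) = l := by omega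
  have harg : 2 * ((l : ℕ) : ℝ) * π / ((2 * l + 1 : ℕ) : ℝ) =
      π - 2 * (π / (2 * (2 * l + 1 : ℕ))) := by
    push_cast; field_simp; ring
  rw [dmax, if_neg (Nat.not_even_iff_odd.2 (odd_two_mul_add_one l)), hhalf, harg, cos_pi_sub,
    cos_two_mul, show 2 - 2 * -(2 * cos (π / (2 * (2 * l + 1 : ℕ))) ^ 2 - 1) =
      (2 * cos (π / (2 * (2 * l + 1 : ℕ)))) ^ 2 by ring]
  exact sqrt_sq (by linarith [cos_pi_div_two_mul_nonneg (2 * l + 1)])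

lemma mul_cos_lt_one_of_lt_Rcrit {n : ℕ} (hodd : Odd n) {R : ℝ} (hR : R < Rcrit n) :
    R * cos (π / (2 * n)) < 1 := by
  rw [Rcrit, dmax_of_odd hodd] at hR
  rcases (cos_pi_div_two_mul_nonneg n).eq_or_lt with h | h
  · rw [← h]; norm_num
  · rw [lt_div_iff₀ (by positivity)] at hR
    linarith

-- `4 k₀ = (2 + s) n + ε` puts `B k₀` at angle `π + sπ/2 + επ/2n`,
-- the lowest vertex in the direction `(0, s)`.
lemma exists_pole {n : ℕ} (hn : 3 ≤ n) (hodd : Odd n) {s : ℝ} (hs : s = 1 ∨ s = -1) :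
    ∃ k₀ : Fin n, ∃ ε : ℝ, (ε = 1 ∨ ε = -1) ∧
      4 * ((k₀ : ℕ) : ℝ) = (2 + s) * n + ε := by
  obtain ⟨l, hl⟩ := hodd
  have hmod : n % 4 = 1 ∨ n % 4 = 3 := by omega
  rcases hs with rfl | rfl <;> rcases hmod with hm | hm
  · refine ⟨⟨(3 * n + 1) / 4, by omega⟩, 1, Or.inl rfl, ?_⟩
    have h : 4 * ((3 * n + 1) / 4) = 3 * n + 1 := by omega
    have h := congrArg (Nat.cast : ℕ → ℝ) h
    push_cast at h ⊢; linarith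
  · refine ⟨⟨(3 * n - 1) / 4, by omega⟩, -1, Or.inr rfl, ?_⟩
    have h : 4 * ((3 * n - 1) / 4) + 1 = 3 * n := by omega
    have h := congrArg (Nat.cast : ℕ → ℝ) h
    push_cast at h ⊢; linarith
  · refine ⟨⟨(n - 1) / 4, by omega⟩, -1, Or.inr rfl, ?_⟩
    have h : 4 * ((n - 1) / 4) + 1 = n := by omega
    have h := congrArg (Nat.cast : ℕ → ℝ) h
    push_cast at h ⊢; linarith
  · refine ⟨⟨(n + 1) / 4, by omega⟩, 1, Or.inl rfl, ?_⟩
    have h : 4 * ((n + 1) / 4) = n + 1 := by omega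
    have h := congrArg (Nat.cast : ℕ → ℝ) h
    push_cast at h ⊢; linarith

section Pole

variable {n : ℕ} {s ε : ℝ} {k₀ : Fin n}

lemma mul_sub_Bpt_snd_of_pole (hs : s = 1 ∨ s = -1) (hε : ε = 1 ∨ ε = -1)
    (hk : 4 * ((k₀ : ℕ) : ℝ) = (2 + s) * n + ε) (R : ℝ) (j : Fin n) :
    s * ((Bpt n R j).2 - (Bpt n R k₀).2) = R * (cos (π / (2 * n)) -
      cos (2 * (((j : ℕ) - (k₀ : ℕ) : ℤ) : ℝ) * π / n + ε * (π / (2 * n)))) := by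
  have hn : n ≠ 0 := k₀.pos.ne'
  have hθ : 2 * ((k₀ : ℕ) : ℝ) * π / n = π + s * (π / 2) + ε * (π / (2 * n)) := by
    rw [show 2 * ((k₀ : ℕ) : ℝ) * π / n = π / (2 * n) * (4 * (k₀ : ℕ)) by
      field_simp; ring, hk]
    field_simp
  have hsin : ∀ θ,
      s * sin θ = -cos (θ - 2 * ((k₀ : ℕ) : ℝ) * π / n + ε * (π / (2 * n))) := by
    intro θ
    rw [hθ, show θ - (π + s * (π / 2) + ε * (π / (2 * n))) + ε * (π / (2 * n)) =
      θ - s * (π / 2) - π by ring, cos_sub_pi, neg_neg]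
    rcases hs with rfl | rfl
    · simp [cos_sub_pi_div_two]
    · simp [cos_add_pi_div_two]
  have hcosε : cos (ε * (π / (2 * n))) = cos (π / (2 * n)) := by
    rcases hε with rfl | rfl <;> simp
  calc s * ((Bpt n R j).2 - (Bpt n R k₀).2)
      = R * (s * sin (2 * ((j : ℕ) : ℝ) * π / n) -
          s * sin (2 * ((k₀ : ℕ) : ℝ) * π / n)) := by
        simp only [Bpt]; ring
    _ = _ := by
        rw [hsin, hsin, sub_self, zero_add, hcosε]
        push_cast
        ring_nf

lemma sqDist_Bpt_lt_of_pole {R : ℝ} (hR0 : 0 < R) (hR : R * cos (π / (2 * n)) < 1)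
    (hs : s = 1 ∨ s = -1) (hε : ε = 1 ∨ ε = -1)
    (hk : 4 * ((k₀ : ℕ) : ℝ) = (2 + s) * n + ε) {j : Fin n} (hj : j ≠ k₀) :
    sqDist (Bpt n R j) (Bpt n R k₀) < 4 * (s * ((Bpt n R j).2 - (Bpt n R k₀).2)) := by
  have hn : n ≠ 0 := k₀.pos.ne'
  have hdvd : ¬ (n : ℤ) ∣ ((j : ℕ) - (k₀ : ℕ) : ℤ) := fun h => hj <| Fin.ext <| by
    have := Int.eq_zero_of_abs_lt_dvd h (abs_sub_lt_iff.2 ⟨by omega, by omega⟩)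
    omega
  have h := mul_lt_mul_of_pos_left (mul_one_sub_cos_lt_of_not_dvd hn hdvd hR hε)
    (by positivity : 0 < 2 * R)
  rw [sqDist_Bpt, mul_sub_Bpt_snd_of_pole hs hε hk]
  linarith

end Pole

lemma enorm2_eq_one_iff {v : ℝ × ℝ} : enorm2 v = 1 ↔ v.1 ^ 2 + v.2 ^ 2 = 1 :=
  sqrt_eq_one

def armSet (C B : ℝ × ℝ) : Set (ℝ × ℝ) := {J | enorm2 (C - J) = 1 ∧ enorm2 (J - B) = 1}

lemma mem_armSet_iff {C B J : ℝ × ℝ} :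
    J ∈ armSet C B ↔ sqDist C J = 1 ∧ sqDist J B = 1 := by
  simp [armSet, sqDist, enorm2_eq_one_iff]

lemma sqDist_le_four_of_mem_armSet {C B J : ℝ × ℝ} (hJ : J ∈ armSet C B) :
    sqDist C B ≤ 4 := by
  rw [mem_armSet_iff] at hJ
  simp only [sqDist] at *
  nlinarith [sq_nonneg ((C.1 - J.1) - (J.1 - B.1)), sq_nonneg ((C.2 - J.2) - (J.2 - B.2))]

noncomputable def knee (C B : ℝ × ℝ) (t : ℝ) : ℝ × ℝ :=
  ((C.1 + B.1) / 2 - t * (B.2 - C.2), (C.2 + B.2) / 2 + t * (B.1 - C.1))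

lemma mem_armSet_iff_eq_knee {C B J : ℝ × ℝ} {t : ℝ} (hD : 0 < sqDist C B)
    (ht : sqDist C B * t ^ 2 = (4 - sqDist C B) / 4) :
    J ∈ armSet C B ↔ J = knee C B t ∨ J = knee C B (-t) := by
  obtain ⟨c1, c2⟩ := C
  obtain ⟨b1, b2⟩ := B
  obtain ⟨j1, j2⟩ := J
  simp only [mem_armSet_iff, sqDist, knee, Prod.mk.injEq] at *
  set D := (c1 - b1) ^ 2 + (c2 - b2) ^ 2
  constructor
  · rintro ⟨hCJ, hJB⟩
    -- for u = J - C and v = B - C, u ⬝ v = D / 2, so the cross product u × v is ±D t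
    have hdot : (b1 - c1) * (j1 - c1) + (b2 - c2) * (j2 - c2) = D / 2 := by
      linear_combination (hCJ - hJB) / 2
    have hcross : ((b1 - c1) * (j2 - c2) - (b2 - c2) * (j1 - c1) - D * t) *
        ((b1 - c1) * (j2 - c2) - (b2 - c2) * (j1 - c1) + D * t) = 0 := by
      linear_combination D * hCJ - ((b1 - c1) * (j1 - c1) + (b2 - c2) * (j2 - c2) + D / 2) * hdot
        - D * ht
    rcases mul_eq_zero.1 hcross with h | h
    · left
      exact ⟨mul_left_cancel₀ hD.ne' (by linear_combination (b1 - c1) * hdot - (b2 - c2) * h),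
        mul_left_cancel₀ hD.ne' (by linear_combination (b2 - c2) * hdot + (b1 - c1) * h)⟩
    · right
      exact ⟨mul_left_cancel₀ hD.ne' (by linear_combination (b1 - c1) * hdot - (b2 - c2) * h),
        mul_left_cancel₀ hD.ne' (by linear_combination (b2 - c2) * hdot + (b1 - c1) * h)⟩
  · rintro (⟨rfl, rfl⟩ | ⟨rfl, rfl⟩) <;> constructor <;> linear_combination ht

lemma armSet_eq_singleton_of_sqDist_eq_four {C B : ℝ × ℝ} (hD : sqDist C B = 4) :
    armSet C B = {knee C B 0} := by
  ext J
  rw [mem_armSet_iff_eq_knee (t := 0) (by linarith) (by rw [hD]; ring), neg_zero, or_self]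
  rfl

lemma ncard_armSet_of_sqDist_lt_four {C B : ℝ × ℝ} (hD0 : 0 < sqDist C B)
    (hD4 : sqDist C B < 4) : (armSet C B).ncard = 2 := by
  set t := sqrt ((4 - sqDist C B) / (4 * sqDist C B))
  have hpos : 0 < (4 - sqDist C B) / (4 * sqDist C B) := by apply div_pos <;> linarith
  have ht : sqDist C B * t ^ 2 = (4 - sqDist C B) / 4 := by
    rw [sq_sqrt hpos.le]; field_simp
  have hne : knee C B t ≠ knee C B (-t) := by
    intro h
    simp only [knee, Prod.mk.injEq] at h
    have ht0 : t ≠ 0 := (sqrt_pos.2 hpos).ne'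
    apply hD0.ne'
    rw [sqDist_eq_zero_iff]
    exact Prod.ext
      (by nlinarith [mul_left_cancel₀ ht0 (show t * (B.1 - C.1) = t * 0 by linarith)])
      (by nlinarith [mul_left_cancel₀ ht0 (show t * (B.2 - C.2) = t * 0 by linarith)])
  rw [show armSet C B = {knee C B t, knee C B (-t)} from
    Set.ext fun J => mem_armSet_iff_eq_knee hD0 ht, Set.ncard_pair hne]

lemma MSpace_fiber_eq (n : ℕ) (R : ℝ) (C : ℝ × ℝ) :
    {x ∈ MSpace n R | x.1 = C} = {C} ×ˢ Set.univ.pi fun j => armSet C (Bpt n R j) := by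
  ext ⟨c, J⟩
  simp only [MSpace, armSet, Set.mem_ofPred_eq, Set.mem_prod,
    Set.mem_singleton_iff, Set.mem_univ_pi]
  constructor
  · rintro ⟨hJ, rfl⟩; exact ⟨rfl, hJ⟩
  · rintro ⟨rfl, hJ⟩; exact ⟨hJ, rfl⟩

lemma ncard_MSpace_fiber (n : ℕ) (R : ℝ) (C : ℝ × ℝ) :
    {x ∈ MSpace n R | x.1 = C}.ncard = ∏ j, (armSet C (Bpt n R j)).ncard := by
  rw [MSpace_fiber_eq, Set.ncard_prod, Set.ncard_singleton, one_mul, ← Nat.card_coe_set_eq,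
    Nat.card_congr (Equiv.Set.univPi _), Nat.card_pi]
  simp only [Nat.card_coe_set_eq]

def stretchedSet (n : ℕ) (R s : ℝ) : Set ((ℝ × ℝ) × (Fin n → ℝ × ℝ)) :=
  {x ∈ MSpace n R | ∃ k : Fin n, x.1 - x.2 k = x.2 k - Bpt n R k ∧ x.1 - x.2 k = (0, s)}

section Stretched

variable {n : ℕ} {R s ε : ℝ} {k₀ : Fin n}

lemma stretchedSet_eq_fiber (hR0 : 0 < R) (hR : R * cos (π / (2 * n)) < 1)
    (hs : s = 1 ∨ s = -1) (hε : ε = 1 ∨ ε = -1)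
    (hk : 4 * ((k₀ : ℕ) : ℝ) = (2 + s) * n + ε) :
    stretchedSet n R s = {x ∈ MSpace n R | x.1 = Bpt n R k₀ + (0, 2 * s)} := by
  have hs2 : s ^ 2 = 1 := by rcases hs with rfl | rfl <;> norm_num
  ext x
  constructor
  · rintro ⟨hx, k, hab, ha⟩
    have hC : x.1 = Bpt n R k + (0, 2 * s) := by
      rw [Prod.ext_iff] at hab ha ⊢
      simp only [Prod.fst_sub, Prod.snd_sub, Prod.fst_add, Prod.snd_add] at hab ha ⊢
      constructor <;> linarith
    refine ⟨hx, ?_⟩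
    obtain rfl : k = k₀ := by
      by_contra hkk₀
      have h4 : sqDist x.1 (Bpt n R k₀) ≤ 4 := sqDist_le_four_of_mem_armSet (hx k₀)
      rw [hC, sqDist_add_vertical] at h4
      nlinarith [sqDist_Bpt_lt_of_pole hR0 hR hs hε hk hkk₀,
        sqDist_nonneg (Bpt n R k) (Bpt n R k₀)]
    exact hC
  · rintro ⟨hx, hC⟩
    have hD : sqDist x.1 (Bpt n R k₀) = 4 := by
      rw [hC, sqDist_add_vertical, sqDist_eq_zero_iff.2 rfl, sub_self]; nlinarith
    have hJ : x.2 k₀ = knee x.1 (Bpt n R k₀) 0 := by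
      have hmem : x.2 k₀ ∈ armSet x.1 (Bpt n R k₀) := hx k₀
      rwa [armSet_eq_singleton_of_sqDist_eq_four hD] at hmem
    refine ⟨hx, k₀, ?_, ?_⟩ <;>
      simp only [hJ, hC, knee, Prod.ext_iff, Prod.fst_sub, Prod.snd_sub, Prod.fst_add,
        Prod.snd_add] <;> constructor <;> ring

lemma ncard_stretchedSet_of_pole (hodd : Odd n) (hR0 : 0 < R) (hR : R * cos (π / (2 * n)) < 1)
    (hs : s = 1 ∨ s = -1) (hε : ε = 1 ∨ ε = -1)
    (hk : 4 * ((k₀ : ℕ) : ℝ) = (2 + s) * n + ε) :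
    (stretchedSet n R s).ncard = 2 ^ (n - 1) := by
  have hs2 : s ^ 2 = 1 := by rcases hs with rfl | rfl <;> norm_num
  have hfar : ∀ j ≠ k₀, (armSet (Bpt n R k₀ + (0, 2 * s)) (Bpt n R j)).ncard = 2 := by
    intro j hj
    apply ncard_armSet_of_sqDist_lt_four
    · refine (sqDist_nonneg _ _).lt_of_ne fun h => ?_
      have hB := congrArg (sqDist · (Bpt n R k₀)) (sqDist_eq_zero_iff.1 h.symm)
      simp only [sqDist_add_vertical, sqDist_eq_zero_iff.2 rfl, sub_self] at hB
      nlinarith [sqDist_Bpt_lt_four hodd hR0.le hR j k₀]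
    · rw [sqDist_add_vertical, sqDist_comm]
      nlinarith [sqDist_Bpt_lt_of_pole hR0 hR hs hε hk hj]
  have hnear : (armSet (Bpt n R k₀ + (0, 2 * s)) (Bpt n R k₀)).ncard = 1 := by
    rw [armSet_eq_singleton_of_sqDist_eq_four, Set.ncard_singleton]
    rw [sqDist_add_vertical, sqDist_eq_zero_iff.2 rfl, sub_self]
    nlinarith
  rw [stretchedSet_eq_fiber hR0 hR hs hε hk, ncard_MSpace_fiber,
    Fintype.prod_eq_mul_prod_compl k₀, hnear, one_mul,
    Finset.prod_congr rfl fun j hj => hfar j (by simpa using hj)]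
  simp [Finset.card_compl]

end Stretched

lemma ncard_stretchedSet {n : ℕ} (hn : 3 ≤ n) (hodd : Odd n) {R : ℝ} (hR0 : 0 < R)
    (hR : R * cos (π / (2 * n)) < 1) {s : ℝ} (hs : s = 1 ∨ s = -1) :
    (stretchedSet n R s).ncard = 2 ^ (n - 1) := by
  obtain ⟨k₀, ε, hε, hk⟩ := exists_pole hn hodd hs
  exact ncard_stretchedSet_of_pole hodd hR0 hR hs hε hk

lemma disjoint_stretchedSet_one_neg_one {n : ℕ} (hn : 3 ≤ n) (hodd : Odd n) {R : ℝ}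
    (hR0 : 0 < R) (hR : R * cos (π / (2 * n)) < 1) :
    Disjoint (stretchedSet n R 1) (stretchedSet n R (-1)) := by
  obtain ⟨k₁, ε₁, hε₁, hk₁⟩ := exists_pole hn hodd (Or.inl rfl : (1 : ℝ) = 1 ∨ _)
  obtain ⟨k₂, ε₂, hε₂, hk₂⟩ := exists_pole hn hodd (Or.inr rfl : (-1 : ℝ) = 1 ∨ _)
  rw [stretchedSet_eq_fiber hR0 hR (Or.inl rfl) hε₁ hk₁,
    stretchedSet_eq_fiber hR0 hR (Or.inr rfl) hε₂ hk₂, Set.disjoint_left]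
  rintro x ⟨-, h₁⟩ ⟨-, h₂⟩
  have h := Prod.ext_iff.1 (h₁.symm.trans h₂)
  have hlt := sqDist_Bpt_lt_four hodd hR0.le hR k₁ k₂
  simp only [Prod.fst_add, Prod.snd_add, sqDist] at h hlt
  nlinarith

/-- Suppose `n ≥ 3` is odd and `0 < R < R_n`. The set of configurations in `M_n(R)`
having a stretched-out arm parallel to the y-axis (some `k` with
`a_k = b_k = (0, 1)` or `a_k = b_k = (0, −1)`) is finite, with exactly `2^n`
elements. -/
theorem stmt19 (n : ℕ) (hn : 3 ≤ n) (hodd : Odd n) (R : ℝ)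
    (hR0 : 0 < R) (hRn : R < Rcrit n) :
    {x ∈ MSpace n R | ∃ k : Fin n,
        x.1 - x.2 k = x.2 k - Bpt n R k ∧
        (x.1 - x.2 k = ((0 : ℝ), (1 : ℝ)) ∨
         x.1 - x.2 k = ((0 : ℝ), (-1 : ℝ)))}.Finite ∧
    {x ∈ MSpace n R | ∃ k : Fin n,
        x.1 - x.2 k = x.2 k - Bpt n R k ∧
        (x.1 - x.2 k = ((0 : ℝ), (1 : ℝ)) ∨
         x.1 - x.2 k = ((0 : ℝ), (-1 : ℝ)))}.ncard = 2 ^ n := by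
  have hR := mul_cos_lt_one_of_lt_Rcrit hodd hRn
  have hcard : ∀ s : ℝ, s = 1 ∨ s = -1 → (stretchedSet n R s).ncard = 2 ^ (n - 1) :=
    fun s hs => ncard_stretchedSet hn hodd hR0 hR hs
  have hfin : ∀ s : ℝ, s = 1 ∨ s = -1 → (stretchedSet n R s).Finite := fun s hs =>
    Set.finite_of_ncard_ne_zero (by rw [hcard s hs]; positivity)
  have hsplit : {x ∈ MSpace n R | ∃ k : Fin n,
      x.1 - x.2 k = x.2 k - Bpt n R k ∧
      (x.1 - x.2 k = ((0 : ℝ), (1 : ℝ)) ∨ x.1 - x.2 k = ((0 : ℝ), (-1 : ℝ)))} =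
      stretchedSet n R 1 ∪ stretchedSet n R (-1) := by
    ext x
    simp only [stretchedSet, Set.mem_union, Set.mem_ofPred_eq, and_or_left, exists_or]
  rw [hsplit, Set.ncard_union_eq (disjoint_stretchedSet_one_neg_one hn hodd hR0 hR)
    (hfin 1 (Or.inl rfl)) (hfin (-1) (Or.inr rfl)), hcard 1 (Or.inl rfl), hcard (-1) (Or.inr rfl)]
  refine ⟨(hfin 1 (Or.inl rfl)).union (hfin (-1) (Or.inr rfl)), ?_⟩
  rw [← two_mul, ← pow_succ', Nat.sub_add_cancel (by omega)]
end
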